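/- arXiv:2109.12519 — 3 statements merged into one kernel-verified Lean document; each statement's English description precedes it below -/
import Mathlib

section
/- Let d ≥ 1 and fix sequences s_k ∈ ℝ^d with s_k ≠ 0, ȳ_k ∈ ℝ^d, and γ_k > 0 for k ∈ ℕ. For each k set B_k = γ_k I, σ_k = s_kᵀ B_k s_k = γ_k ‖s_k‖², θ_k = 0.7σ_k/(σ_k − s_kᵀȳ_k) if s_kᵀȳ_k < 0.3σ_k and θ_k = 1 otherwise, ŷ_k = θ_k ȳ_k + (1 − θ_k) B_k s_k, and ρ_k = (s_kᵀŷ_k)⁻¹. Let H_0 ∈ ℝ^{d×d} be any symmetric positive definite matrix, and define recursively H_{k+1} = (I − ρ_k s_k ŷ_kᵀ) H_k (I − ρ_k ŷ_k s_kᵀ) + ρ_k s_k s_kᵀ. Then for every k ∈ ℕ, ρ_k is well defined (s_kᵀŷ_k > 0) and H_k is symmetric positive definite. -/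
open Matrix

/-- The damping coefficient of stochastic damped L-BFGS (Eq. (2.2) of the paper). -/
noncomputable def sqnDampTheta (σ sy : ℝ) : ℝ :=
  if sy < 0.3 * σ then 0.7 * σ / (σ - sy) else 1

lemma vmv_mulVec {d : ℕ} (a b x : Fin d → ℝ) :
    (vecMulVec a b) *ᵥ x = (b ⬝ᵥ x) • a := by
  ext i
  simp [mulVec, dotProduct, vecMulVec_apply, Finset.mul_sum, mul_comm, mul_left_comm]

lemma vmv_transpose {d : ℕ} (a b : Fin d → ℝ) :
    (vecMulVec a b)ᵀ = vecMulVec b a := by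
  ext i j
  simp [vecMulVec_apply, mul_comm]

lemma bfgs_step {d : ℕ} {H : Matrix (Fin d) (Fin d) ℝ} (hH : H.PosDef)
    {s yhat : Fin d → ℝ} (hs : s ≠ 0) (hc : 0 < s ⬝ᵥ yhat) :
    (((1 - (s ⬝ᵥ yhat)⁻¹ • vecMulVec s yhat) * H * (1 - (s ⬝ᵥ yhat)⁻¹ • vecMulVec yhat s) +
      (s ⬝ᵥ yhat)⁻¹ • vecMulVec s s)).PosDef := by
  set ρ : ℝ := (s ⬝ᵥ yhat)⁻¹ with hρ
  have hρpos : 0 < ρ := inv_pos.mpr hc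
  set A : Matrix (Fin d) (Fin d) ℝ := 1 - ρ • vecMulVec yhat s with hA
  have hAT : Aᵀ = 1 - ρ • vecMulVec s yhat := by
    simp [hA, transpose_sub, transpose_smul, vmv_transpose]
  rw [posDef_iff_dotProduct_mulVec]
  constructor
  · -- Hermitian
    have hHt : Hᵀ = H := hH.1
    show _ᴴ = _
    simp only [conjTranspose_eq_transpose_of_trivial, transpose_add, transpose_mul,
      transpose_transpose, ← hAT, transpose_smul, vmv_transpose, hHt, Matrix.mul_assoc]
  · intro x hx
    have key : star x ⬝ᵥ ((Aᵀ * H * A + ρ • vecMulVec s s) *ᵥ x) =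
        (A *ᵥ x) ⬝ᵥ (H *ᵥ (A *ᵥ x)) + ρ * (s ⬝ᵥ x) ^ 2 := by
      simp only [star_trivial, add_mulVec, dotProduct_add, smul_mulVec,
        dotProduct_smul, vmv_mulVec, ← mulVec_mulVec]
      rw [dotProduct_mulVec x Aᵀ, vecMul_transpose, dotProduct_comm x s]
      simp only [smul_eq_mul]
      ring
    rw [← hAT, key]
    rcases eq_or_ne (A *ᵥ x) 0 with h0 | h0
    · have hAx : x - (ρ * (s ⬝ᵥ x)) • yhat = 0 := by
        have : A *ᵥ x = x - (ρ * (s ⬝ᵥ x)) • yhat := by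
          simp [hA, sub_mulVec, smul_mulVec, vmv_mulVec, smul_smul]
        rwa [this] at h0
      have hsx : s ⬝ᵥ x ≠ 0 := by
        intro h
        apply hx
        have := hAx
        rw [h, mul_zero, zero_smul, sub_zero] at this
        exact this
      rw [h0]
      have : (0:ℝ) < ρ * (s ⬝ᵥ x) ^ 2 :=
        mul_pos hρpos (by positivity)
      simpa using this
    · have h1 : 0 < (A *ᵥ x) ⬝ᵥ (H *ᵥ (A *ᵥ x)) := by
        have := hH.dotProduct_mulVec_pos h0
        simpa using this
      have h2 : 0 ≤ ρ * (s ⬝ᵥ x) ^ 2 := by positivity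
      linarith

/-- Appendix claim of the paper: the inverse Hessian approximations generated by the
stochastic damped L-BFGS recursion are symmetric positive definite, even with
arbitrary (stale) curvature information, and the scalars ρₖ are well defined. -/
theorem damped_lbfgs_posDef (d : ℕ) (hd : 1 ≤ d)
    (s ybar : ℕ → (Fin d → ℝ)) (γ : ℕ → ℝ)
    (hs : ∀ k, s k ≠ 0) (hγ : ∀ k, 0 < γ k)
    (H : ℕ → Matrix (Fin d) (Fin d) ℝ)
    (hH0 : (H 0).PosDef)
    (hrec : ∀ k,
      H (k + 1) =
        (let B : Matrix (Fin d) (Fin d) ℝ := γ k • (1 : Matrix (Fin d) (Fin d) ℝ)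
         let σ : ℝ := s k ⬝ᵥ B.mulVec (s k)
         let θ : ℝ := sqnDampTheta σ (s k ⬝ᵥ ybar k)
         let yhat : Fin d → ℝ := θ • ybar k + (1 - θ) • B.mulVec (s k)
         let ρ : ℝ := (s k ⬝ᵥ yhat)⁻¹
         (1 - ρ • vecMulVec (s k) yhat) * H k * (1 - ρ • vecMulVec yhat (s k)) +
           ρ • vecMulVec (s k) (s k))) :
    ∀ k,
      (let B : Matrix (Fin d) (Fin d) ℝ := γ k • (1 : Matrix (Fin d) (Fin d) ℝ)
       let σ : ℝ := s k ⬝ᵥ B.mulVec (s k)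
       let θ : ℝ := sqnDampTheta σ (s k ⬝ᵥ ybar k)
       let yhat : Fin d → ℝ := θ • ybar k + (1 - θ) • B.mulVec (s k)
       0 < s k ⬝ᵥ yhat) ∧ (H k).PosDef := by
  -- the scalar positivity for every k
  have scal : ∀ k,
      0 < s k ⬝ᵥ ((sqnDampTheta (s k ⬝ᵥ (γ k • (1 : Matrix (Fin d) (Fin d) ℝ)).mulVec (s k))
          (s k ⬝ᵥ ybar k)) • ybar k +
        (1 - sqnDampTheta (s k ⬝ᵥ (γ k • (1 : Matrix (Fin d) (Fin d) ℝ)).mulVec (s k))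
          (s k ⬝ᵥ ybar k)) • (γ k • (1 : Matrix (Fin d) (Fin d) ℝ)).mulVec (s k)) := by
    intro k
    have hBs : (γ k • (1 : Matrix (Fin d) (Fin d) ℝ)).mulVec (s k) = γ k • s k := by
      simp [smul_mulVec]
    have hσ : s k ⬝ᵥ (γ k • (1 : Matrix (Fin d) (Fin d) ℝ)).mulVec (s k)
        = γ k * (s k ⬝ᵥ s k) := by
      simp [hBs, dotProduct_smul]
    have hss : 0 < s k ⬝ᵥ s k := by
      rcases eq_or_ne (s k) 0 with h | h
      · exact absurd h (hs k)
      · have h1 : 0 ≤ s k ⬝ᵥ s k :=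
          Finset.sum_nonneg fun i _ => mul_self_nonneg _
        rcases lt_or_eq_of_le h1 with h2 | h2
        · exact h2
        · exact absurd (dotProduct_self_eq_zero.mp h2.symm) h
    rw [hσ]
    set σ := γ k * (s k ⬝ᵥ s k) with hσdef
    have hσpos : 0 < σ := mul_pos (hγ k) hss
    set sy := s k ⬝ᵥ ybar k with hsy
    set θ := sqnDampTheta σ sy with hθ
    have hval : s k ⬝ᵥ (θ • ybar k + (1 - θ) • (γ k • (1 : Matrix (Fin d) (Fin d) ℝ)).mulVec (s k))
        = θ * sy + (1 - θ) * σ := by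
      simp [dotProduct_add, dotProduct_smul, hBs, hσdef, smul_smul, hsy]
      ring
    rw [hval]
    unfold sqnDampTheta at hθ
    by_cases hcase : sy < 0.3 * σ
    · rw [hθ, if_pos hcase]
      have hden : 0 < σ - sy := by nlinarith
      have heq : 0.7 * σ / (σ - sy) * sy + (1 - 0.7 * σ / (σ - sy)) * σ = 0.3 * σ := by
        field_simp
        ring
      rw [heq]
      nlinarith
    · rw [hθ, if_neg hcase]
      push_neg at hcase
      nlinarith
  intro k
  refine ⟨scal k, ?_⟩
  induction k with
  | zero => exact hH0
  | succ n ih =>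
    rw [hrec n]
    exact bfgs_step ih (hs n) (scal n)
end

section
/- Let f : ℝ^d → ℝ be differentiable with L-Lipschitz gradient, where L ≥ 0, let γ ≥ 0 and σ₂ ≥ 0, and let S be a set of coordinates in {1, …, d}. Suppose w' = w + γ (δ_1 + ⋯ + δ_m) where δ_1, …, δ_m ∈ ℝ^d satisfy ‖δ_j‖ ≤ σ₂ ‖v_j‖ for given vectors v_1, …, v_m ∈ ℝ^d. Then ‖∇_S f(w')‖² ≥ (1/2)‖∇_S f(w)‖² − m σ₂² L² γ² (‖v_1‖² + ⋯ + ‖v_m‖²). -/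
open RealInnerProductSpace

/-- The block gradient ∇_S f(w): the coordinates in S equal those of the gradient
∇f(w) and the other coordinates are zero. -/
noncomputable def blockGrad {d : ℕ} (f : EuclideanSpace ℝ (Fin d) → ℝ)
    (S : Finset (Fin d)) (w : EuclideanSpace ℝ (Fin d)) : EuclideanSpace ℝ (Fin d) :=
  WithLp.toLp 2 (fun i => if i ∈ S then gradient f w i else 0)

lemma blockGrad_sub_norm_le {d : ℕ} (f : EuclideanSpace ℝ (Fin d) → ℝ)
    (S : Finset (Fin d)) (w w' : EuclideanSpace ℝ (Fin d)) :
    ‖blockGrad f S w' - blockGrad f S w‖ ≤ ‖gradient f w' - gradient f w‖ := by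
  rw [EuclideanSpace.norm_eq, EuclideanSpace.norm_eq]
  apply Real.sqrt_le_sqrt
  apply Finset.sum_le_sum
  intro i _
  have h1 : (blockGrad f S w' - blockGrad f S w) i
      = (if i ∈ S then gradient f w' i - gradient f w i else 0) := by
    simp only [PiLp.sub_apply, blockGrad, PiLp.toLp_apply]
    split <;> simp
  have h2 : (gradient f w' - gradient f w) i = gradient f w' i - gradient f w i := rfl
  rw [h1, h2]
  split
  · exact le_rfl
  · simpa using sq_nonneg ‖gradient f w' i - gradient f w i‖

/-- Deterministic content of Lemma 3 (Lemma A.1) of the paper: if the displacement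
between w and w' is γ times a sum of m updates δⱼ with ‖δⱼ‖ ≤ σ₂‖vⱼ‖, then
‖∇_S f(w')‖² ≥ (1/2)‖∇_S f(w)‖² − m σ₂² L² γ² ∑ⱼ ‖vⱼ‖². -/
theorem block_grad_delay_lower_bound (d m : ℕ)
    (f : EuclideanSpace ℝ (Fin d) → ℝ) (L γ σ₂ : ℝ)
    (hL : 0 ≤ L) (hγ : 0 ≤ γ) (hσ₂ : 0 ≤ σ₂)
    (hdiff : Differentiable ℝ f)
    (hlip : ∀ w w' : EuclideanSpace ℝ (Fin d),
      ‖gradient f w - gradient f w'‖ ≤ L * ‖w - w'‖)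
    (S : Finset (Fin d)) (w w' : EuclideanSpace ℝ (Fin d))
    (δ v : Fin m → EuclideanSpace ℝ (Fin d))
    (hδ : ∀ j, ‖δ j‖ ≤ σ₂ * ‖v j‖)
    (hw' : w' = w + γ • ∑ j, δ j) :
    ‖blockGrad f S w'‖ ^ 2 ≥
      (1 / 2) * ‖blockGrad f S w‖ ^ 2 -
        (m : ℝ) * σ₂ ^ 2 * L ^ 2 * γ ^ 2 * ∑ j, ‖v j‖ ^ 2 := by
  set a := blockGrad f S w'
  set b := blockGrad f S w
  -- step 1: ‖b‖² ≤ 2‖a‖² + 2‖a-b‖²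
  have hab : ‖b‖ ≤ ‖a‖ + ‖a - b‖ := by
    have := norm_add_le a (b - a)
    simpa [norm_sub_rev] using this
  -- step 2: bound ‖a - b‖
  have h1 : ‖a - b‖ ≤ ‖gradient f w' - gradient f w‖ :=
    blockGrad_sub_norm_le f S w w'
  have h2 : ‖gradient f w' - gradient f w‖ ≤ L * ‖w' - w‖ := hlip w' w
  have h3 : ‖w' - w‖ = γ * ‖∑ j, δ j‖ := by
    rw [hw']; simp [norm_smul, abs_of_nonneg hγ]
  have h4 : ‖∑ j, δ j‖ ≤ σ₂ * ∑ j, ‖v j‖ := by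
    calc ‖∑ j, δ j‖ ≤ ∑ j, ‖δ j‖ := norm_sum_le _ _
    _ ≤ ∑ j, σ₂ * ‖v j‖ := Finset.sum_le_sum fun j _ => hδ j
    _ = σ₂ * ∑ j, ‖v j‖ := by rw [Finset.mul_sum]
  have h5 : (∑ j, ‖v j‖) ^ 2 ≤ (m : ℝ) * ∑ j, ‖v j‖ ^ 2 := by
    have := sq_sum_le_card_mul_sum_sq (s := Finset.univ) (f := fun j => ‖v j‖)
    simpa using this
  have hsum : (0 : ℝ) ≤ ∑ j, ‖v j‖ := Finset.sum_nonneg fun j _ => norm_nonneg _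
  have hδnn : (0 : ℝ) ≤ ‖∑ j, δ j‖ := norm_nonneg _
  have h6 : ‖a - b‖ ≤ L * γ * (σ₂ * ∑ j, ‖v j‖) := by
    calc ‖a - b‖ ≤ L * ‖w' - w‖ := h1.trans h2
    _ = L * γ * ‖∑ j, δ j‖ := by rw [h3]; ring
    _ ≤ L * γ * (σ₂ * ∑ j, ‖v j‖) := by
        apply mul_le_mul_of_nonneg_left h4 (by positivity)
  have h7 : ‖a - b‖ ^ 2 ≤ (m : ℝ) * σ₂ ^ 2 * L ^ 2 * γ ^ 2 * ∑ j, ‖v j‖ ^ 2 := by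
    calc ‖a - b‖ ^ 2 ≤ (L * γ * (σ₂ * ∑ j, ‖v j‖)) ^ 2 :=
          pow_le_pow_left₀ (norm_nonneg _) h6 2
    _ = L ^ 2 * γ ^ 2 * σ₂ ^ 2 * (∑ j, ‖v j‖) ^ 2 := by ring
    _ ≤ L ^ 2 * γ ^ 2 * σ₂ ^ 2 * ((m : ℝ) * ∑ j, ‖v j‖ ^ 2) :=
          mul_le_mul_of_nonneg_left h5 (by positivity)
    _ = (m : ℝ) * σ₂ ^ 2 * L ^ 2 * γ ^ 2 * ∑ j, ‖v j‖ ^ 2 := by ring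
  nlinarith [norm_nonneg a, norm_nonneg b, norm_nonneg (a - b), hab, h7,
    sq_nonneg (‖a‖ - ‖a - b‖)]
end

section
/- Let f : ℝ^d → ℝ be differentiable with L-Lipschitz gradient and with L_S-Lipschitz block gradient with respect to a coordinate set S, i.e., ‖∇_S f(w + Δ) − ∇_S f(w)‖ ≤ L_S ‖Δ‖ for all w and all Δ supported on S. Let A be a symmetric d×d matrix that vanishes on coordinates outside S and satisfies σ₁‖x‖² ≤ xᵀAx ≤ σ₂‖x‖² for all x supported on S, with 0 < σ₁ ≤ σ₂. Let γ > 0, let w, ŵ ∈ ℝ^d, set v = ∇_S f(ŵ) and w⁺ = w − γ A v. Then f(w⁺) ≤ f(w) − (γσ₁/2)‖∇_S f(w)‖² + (γσ₂L²/2)‖w − ŵ‖² + (L_S γ² σ₂²/2)‖v‖². -/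
open RealInnerProductSpace Matrix

/-- A matrix acting on a Euclidean vector. -/
noncomputable def matVec {d : ℕ} (A : Matrix (Fin d) (Fin d) ℝ)
    (x : EuclideanSpace ℝ (Fin d)) : EuclideanSpace ℝ (Fin d) :=
  WithLp.toLp 2 (fun i => A.mulVec (fun j => x j) i)

section Helpers
variable {d : ℕ}
local notation "E" => EuclideanSpace ℝ (Fin d)

private lemma inner_eq_sum' (x y : E) : ⟪x, y⟫ = ∑ i, x i * y i := by
  simp [PiLp.inner_apply]
  exact Finset.sum_congr rfl (fun i _ => mul_comm _ _)

private lemma matVec_add' (A : Matrix (Fin d) (Fin d) ℝ) (x y : E) :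
    matVec A (x + y) = matVec A x + matVec A y := by
  ext i
  show A.mulVec _ i = A.mulVec _ i + A.mulVec _ i
  simp [Matrix.mulVec, dotProduct, mul_add, Finset.sum_add_distrib]

private lemma matVec_smul' (A : Matrix (Fin d) (Fin d) ℝ) (c : ℝ) (x : E) :
    matVec A (c • x) = c • matVec A x := by
  ext i
  show A.mulVec _ i = c * A.mulVec _ i
  simp [Matrix.mulVec, dotProduct, Finset.mul_sum]
  ring_nf
  simp [mul_comm, mul_assoc, mul_left_comm]

private lemma matVec_sub' (A : Matrix (Fin d) (Fin d) ℝ) (x y : E) :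
    matVec A (x - y) = matVec A x - matVec A y := by
  have h : x - y + y = x := sub_add_cancel x y
  have := matVec_add' A (x - y) y
  rw [h] at this
  exact eq_sub_of_add_eq this.symm

private lemma inner_matVec_symm' (A : Matrix (Fin d) (Fin d) ℝ) (hA : A.IsSymm) (x y : E) :
    ⟪x, matVec A y⟫ = ⟪y, matVec A x⟫ := by
  simp only [inner_eq_sum', matVec, WithLp.ofLp_toLp, Matrix.mulVec, dotProduct, Finset.mul_sum]
  rw [Finset.sum_comm]
  apply Finset.sum_congr rfl
  intro i _
  apply Finset.sum_congr rfl
  intro j _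
  rw [← hA.apply i j]
  ring

private lemma matVec_supp' (A : Matrix (Fin d) (Fin d) ℝ) (S : Finset (Fin d))
    (hAsupp : ∀ i j, i ∉ S ∨ j ∉ S → A i j = 0) (x : E) :
    ∀ i ∉ S, matVec A x i = 0 := by
  intro i hi
  simp only [matVec, WithLp.ofLp_toLp, Matrix.mulVec, dotProduct]
  apply Finset.sum_eq_zero
  intro j _
  rw [hAsupp i j (Or.inl hi), zero_mul]

private lemma blockGrad_supp' (f : E → ℝ) (S : Finset (Fin d)) (w : E) :
    ∀ i ∉ S, blockGrad f S w i = 0 := fun _ hi => by simp [blockGrad, hi]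

private lemma norm_blockGrad_sub_le' (f : E → ℝ) (S : Finset (Fin d)) (w w' : E) :
    ‖blockGrad f S w - blockGrad f S w'‖ ≤ ‖gradient f w - gradient f w'‖ := by
  rw [EuclideanSpace.norm_eq, EuclideanSpace.norm_eq]
  apply Real.sqrt_le_sqrt
  apply Finset.sum_le_sum
  intro i _
  have h1 : (blockGrad f S w - blockGrad f S w') i
      = if i ∈ S then gradient f w i - gradient f w' i else 0 := by
    show blockGrad f S w i - blockGrad f S w' i = _
    by_cases hi : i ∈ S <;> simp [blockGrad, hi]
  rw [h1]
  have h2 : (gradient f w - gradient f w') i = gradient f w i - gradient f w' i := rfl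
  rw [h2]
  by_cases hi : i ∈ S <;> simp [hi] <;> positivity

private lemma inner_supp_eq_blockGrad' (f : E → ℝ) (S : Finset (Fin d)) (x Δ : E)
    (h : ∀ i ∉ S, Δ i = 0) :
    ⟪gradient f x, Δ⟫ = ⟪blockGrad f S x, Δ⟫ := by
  simp only [PiLp.inner_apply, RCLike.inner_apply, conj_trivial]
  apply Finset.sum_congr rfl
  intro i _
  by_cases hi : i ∈ S
  · simp [blockGrad, hi]
  · simp [h i hi]

private lemma descent_lemma' (f : E → ℝ) (hdiff : Differentiable ℝ f)
    (hgradcont : Continuous (gradient f)) (C : ℝ) (w Δ : E)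
    (hlip : ∀ t ∈ Set.Icc (0:ℝ) 1, ⟪gradient f (w + t • Δ) - gradient f w, Δ⟫ ≤ C * t) :
    f (w + Δ) ≤ f w + ⟪gradient f w, Δ⟫ + C / 2 := by
  set g' : ℝ → ℝ := fun t => ⟪gradient f (w + t • Δ), Δ⟫ with hg'def
  have hg : ∀ t : ℝ, HasDerivAt (fun s => f (w + s • Δ)) (g' t) t := by
    intro t
    have hline : HasDerivAt (fun s : ℝ => w + s • Δ) Δ t := by
      simpa using ((hasDerivAt_id t).smul_const Δ).const_add w
    have hf := (hdiff (w + t • Δ)).hasGradientAt.hasFDerivAt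
    have := hf.comp_hasDerivAt t hline
    simp only [InnerProductSpace.toDual_apply_apply] at this
    exact this
  have hcont : Continuous g' := by
    apply Continuous.inner
    · exact hgradcont.comp (by continuity)
    · exact continuous_const
  have hint : ∫ t in (0:ℝ)..1, g' t = f (w + Δ) - f w := by
    have := intervalIntegral.integral_eq_sub_of_hasDerivAt
      (f := fun s => f (w + s • Δ)) (f' := g')
      (fun t _ => hg t) (hcont.intervalIntegrable 0 1)
    simpa using this
  have hmono : ∫ t in (0:ℝ)..1, g' t ≤ ∫ t in (0:ℝ)..1, (g' 0 + C * t) := by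
    apply intervalIntegral.integral_mono_on (by norm_num)
      (hcont.intervalIntegrable 0 1)
      ((continuous_const.add (continuous_const.mul continuous_id')).intervalIntegrable 0 1)
    intro t ht
    have h := hlip t ht
    have : g' t - g' 0 = ⟪gradient f (w + t • Δ) - gradient f w, Δ⟫ := by
      simp [hg'def, inner_sub_left]
    show g' t ≤ g' 0 + C * t
    linarith [h, this.ge.trans_eq rfl, this.le]
  have hval : ∫ t in (0:ℝ)..1, (g' 0 + C * t) = g' 0 + C / 2 := by
    rw [intervalIntegral.integral_add (f := fun _ => g' 0) (g := fun t => C * t) (intervalIntegrable_const)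
      ((continuous_const.mul continuous_id').intervalIntegrable 0 1)]
    rw [intervalIntegral.integral_const_mul, integral_id]
    simp
    ring
  have hg'0 : g' 0 = ⟪gradient f w, Δ⟫ := by simp [hg'def]
  nlinarith [hint, hmono, hval, hg'0]

end Helpers

/-- Deterministic single-step descent estimate (inequalities (a)-(c) in
Eq. (EqThm1_1) of the paper's proof of Theorem 1): a quasi-Newton block step
w⁺ = w − γ A ∇_S f(wHat), with A symmetric, supported on S, and with spectrum in
[σ₁, σ₂] on vectors supported on S, decreases f up to staleness error. -/
theorem asysqn_one_step_descent (d : ℕ)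
    (f : EuclideanSpace ℝ (Fin d) → ℝ) (L LS σ₁ σ₂ γ : ℝ)
    (hL : 0 ≤ L) (hdiff : Differentiable ℝ f)
    (hlipfull : ∀ w w' : EuclideanSpace ℝ (Fin d),
      ‖gradient f w - gradient f w'‖ ≤ L * ‖w - w'‖)
    (S : Finset (Fin d))
    (hlipS : ∀ (w Δ : EuclideanSpace ℝ (Fin d)), (∀ i ∉ S, Δ i = 0) →
      ‖blockGrad f S (w + Δ) - blockGrad f S w‖ ≤ LS * ‖Δ‖)
    (A : Matrix (Fin d) (Fin d) ℝ) (hAsymm : A.IsSymm)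
    (hAsupp : ∀ i j, i ∉ S ∨ j ∉ S → A i j = 0)
    (hσ₁ : 0 < σ₁) (hσ₁₂ : σ₁ ≤ σ₂)
    (hquad : ∀ x : EuclideanSpace ℝ (Fin d), (∀ i ∉ S, x i = 0) →
      σ₁ * ‖x‖ ^ 2 ≤ ⟪x, matVec A x⟫ ∧ ⟪x, matVec A x⟫ ≤ σ₂ * ‖x‖ ^ 2)
    (hγ : 0 < γ) (w wHat : EuclideanSpace ℝ (Fin d)) :
    f (w - γ • matVec A (blockGrad f S wHat)) ≤
      f w - (γ * σ₁ / 2) * ‖blockGrad f S w‖ ^ 2 +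
        (γ * σ₂ * L ^ 2 / 2) * ‖w - wHat‖ ^ 2 +
        (LS * γ ^ 2 * σ₂ ^ 2 / 2) * ‖blockGrad f S wHat‖ ^ 2 := by
  have hσ₂ : 0 < σ₂ := lt_of_lt_of_le hσ₁ hσ₁₂
  rcases S.eq_empty_or_nonempty with hS | hS
  · -- S empty: all block gradients vanish
    subst hS
    have hv : blockGrad f (∅ : Finset (Fin d)) wHat = 0 := by
      ext i; simp [blockGrad]
    have hg : blockGrad f (∅ : Finset (Fin d)) w = 0 := by
      ext i; simp [blockGrad]
    have hu : matVec A (0 : EuclideanSpace ℝ (Fin d)) = 0 := by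
      ext i
      show A.mulVec _ i = 0
      simp only [Matrix.mulVec, dotProduct]
      apply Finset.sum_eq_zero
      intro j _
      show A i j * (0 : EuclideanSpace ℝ (Fin d)) j = 0
      simp
    rw [hv, hg, hu, smul_zero, sub_zero, norm_zero]
    have h1 : (0:ℝ) ≤ (γ * σ₂ * L ^ 2 / 2) * ‖w - wHat‖ ^ 2 := by positivity
    nlinarith [h1]
  · -- S nonempty: LS ≥ 0
    obtain ⟨i₀, hi₀⟩ := hS
    have hLS : 0 ≤ LS := by
      have hsupp : ∀ i ∉ S, (EuclideanSpace.single i₀ (1:ℝ)) i = 0 := by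
        intro i hi
        rw [EuclideanSpace.single_apply, if_neg (fun h : i = i₀ => hi (h ▸ hi₀))]
      have := hlipS w (EuclideanSpace.single i₀ (1:ℝ)) hsupp
      rw [EuclideanSpace.norm_single] at this
      simp at this
      exact le_trans (norm_nonneg _) this
    set v := blockGrad f S wHat with hvdef
    set g := blockGrad f S w with hgdef
    set u := matVec A v with hudef
    set e := g - v with hedef
    have hvs : ∀ i ∉ S, v i = 0 := blockGrad_supp' f S wHat
    have hgs : ∀ i ∉ S, g i = 0 := blockGrad_supp' f S w
    have hus : ∀ i ∉ S, u i = 0 := matVec_supp' A S hAsupp v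
    have hes : ∀ i ∉ S, e i = 0 := by
      intro i hi
      show g i - v i = 0
      rw [hgs i hi, hvs i hi, sub_zero]
    -- PSD facts
    have psd : ∀ z : EuclideanSpace ℝ (Fin d), (∀ i ∉ S, z i = 0) →
        0 ≤ ⟪z, matVec A z⟫ := by
      intro z hz
      exact le_trans (by positivity) (hquad z hz).1
    have two_mul_le : ∀ x y : EuclideanSpace ℝ (Fin d), (∀ i ∉ S, x i = 0) →
        (∀ i ∉ S, y i = 0) →
        2 * ⟪x, matVec A y⟫ ≤ ⟪x, matVec A x⟫ + ⟪y, matVec A y⟫ := by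
      intro x y hx hy
      have hxy : ∀ i ∉ S, (x - y) i = 0 := by
        intro i hi
        show x i - y i = 0
        rw [hx i hi, hy i hi, sub_zero]
      have h0 := psd (x - y) hxy
      rw [matVec_sub', inner_sub_left, inner_sub_right, inner_sub_right] at h0
      have hsym := inner_matVec_symm' A hAsymm y x
      linarith
    -- cross term bound
    have hcross : σ₁ / 2 * ‖g‖ ^ 2 - σ₂ / 2 * ‖e‖ ^ 2 ≤ ⟪g, matVec A v⟫ := by
      have hv_eq : v = g - e := by rw [hedef]; abel
      have hexp : ⟪g, matVec A v⟫ = ⟪g, matVec A g⟫ - ⟪g, matVec A e⟫ := by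
        rw [hv_eq, matVec_sub', inner_sub_right]
      have h2 := two_mul_le g e hgs hes
      have h3 := (hquad g hgs).1
      have h4 := (hquad e hes).2
      linarith
    -- operator norm bound : ‖u‖² ≤ σ₂² ‖v‖²
    have hAv : ‖u‖ ^ 2 ≤ σ₂ ^ 2 * ‖v‖ ^ 2 := by
      have h1 : ⟪u, u⟫ = ⟪v, matVec A u⟫ := by
        rw [hudef]
        exact inner_matVec_symm' A hAsymm v (matVec A v) ▸ rfl
      have hσv : ∀ i ∉ S, (σ₂ • v) i = 0 := by
        intro i hi
        show σ₂ * v i = 0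
        rw [hvs i hi, mul_zero]
      have h2 := two_mul_le (σ₂ • v) u hσv hus
      have h3 : ⟪σ₂ • v, matVec A u⟫ = σ₂ * ⟪v, matVec A u⟫ := real_inner_smul_left _ _ _
      have h4 : ⟪σ₂ • v, matVec A (σ₂ • v)⟫ = σ₂ ^ 2 * ⟪v, matVec A v⟫ := by
        rw [matVec_smul', real_inner_smul_left, real_inner_smul_right]
        ring
      have h5 := (hquad v hvs).2
      have h6 := (hquad u hus).2
      have hnorm : ⟪u, u⟫ = ‖u‖ ^ 2 := real_inner_self_eq_norm_sq u
      have h1' : σ₂ * ⟪v, matVec A u⟫ = σ₂ * ‖u‖ ^ 2 := by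
        rw [h1.symm.trans hnorm]
      have e1 : σ₂ ^ 2 * ⟪v, matVec A v⟫ ≤ σ₂ ^ 2 * (σ₂ * ‖v‖ ^ 2) :=
        mul_le_mul_of_nonneg_left h5 (by positivity)
      have h2' : 2 * (σ₂ * ⟪v, matVec A u⟫) ≤ σ₂ ^ 2 * ⟪v, matVec A v⟫ + ⟪u, matVec A u⟫ := by
        rw [← h3, ← h4]; linarith [h2]
      have e2 : σ₂ * ‖u‖ ^ 2 ≤ σ₂ * (σ₂ ^ 2 * ‖v‖ ^ 2) := by linarith [h2', h1', e1, h6]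
      exact le_of_mul_le_mul_left e2 hσ₂
    -- staleness bound
    have hE : ‖e‖ ^ 2 ≤ L ^ 2 * ‖w - wHat‖ ^ 2 := by
      have h1 : ‖e‖ ≤ ‖gradient f w - gradient f wHat‖ := norm_blockGrad_sub_le' f S w wHat
      have h2 := hlipfull w wHat
      nlinarith [norm_nonneg e, norm_nonneg (w - wHat), h1, h2]
    -- continuity of the gradient
    have hgradcont : Continuous (gradient f) := by
      have hlw : LipschitzWith L.toNNReal (gradient f) := by
        apply LipschitzWith.of_dist_le_mul
        intro x y
        rw [dist_eq_norm, dist_eq_norm]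
        calc ‖gradient f x - gradient f y‖ ≤ L * ‖x - y‖ := hlipfull x y
        _ = ↑L.toNNReal * ‖x - y‖ := by rw [Real.coe_toNNReal L hL]
      exact hlw.continuous
    -- the step
    set Δ : EuclideanSpace ℝ (Fin d) := (-γ) • u with hΔdef
    have hstep : w - γ • matVec A v = w + Δ := by
      rw [hΔdef, neg_smul, ← sub_eq_add_neg, hudef]
    have hΔs : ∀ i ∉ S, Δ i = 0 := by
      intro i hi
      show -γ * u i = 0
      rw [hus i hi, mul_zero]
    have hΔnorm : ‖Δ‖ = γ * ‖u‖ := by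
      rw [hΔdef, norm_smul]
      simp [abs_of_pos hγ]
    -- Lipschitz bound along the segment
    have hlipseg : ∀ t ∈ Set.Icc (0:ℝ) 1,
        ⟪gradient f (w + t • Δ) - gradient f w, Δ⟫ ≤ (LS * ‖Δ‖ ^ 2) * t := by
      intro t ht
      have htΔs : ∀ i ∉ S, (t • Δ) i = 0 := by
        intro i hi
        show t * Δ i = 0
        rw [hΔs i hi, mul_zero]
      have heq : ⟪gradient f (w + t • Δ) - gradient f w, Δ⟫
          = ⟪blockGrad f S (w + t • Δ) - blockGrad f S w, Δ⟫ := by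
        rw [inner_sub_left, inner_sub_left,
          inner_supp_eq_blockGrad' f S (w + t • Δ) Δ hΔs,
          inner_supp_eq_blockGrad' f S w Δ hΔs]
      rw [heq]
      have hcs := real_inner_le_norm (blockGrad f S (w + t • Δ) - blockGrad f S w) Δ
      have hlb := hlipS w (t • Δ) htΔs
      have htΔnorm : ‖t • Δ‖ = t * ‖Δ‖ := by
        rw [norm_smul]
        simp [abs_of_nonneg ht.1]
      rw [htΔnorm] at hlb
      calc ⟪blockGrad f S (w + t • Δ) - blockGrad f S w, Δ⟫
          ≤ ‖blockGrad f S (w + t • Δ) - blockGrad f S w‖ * ‖Δ‖ := hcs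
        _ ≤ (LS * (t * ‖Δ‖)) * ‖Δ‖ := mul_le_mul_of_nonneg_right hlb (norm_nonneg Δ)
        _ = (LS * ‖Δ‖ ^ 2) * t := by ring
    have hdesc := descent_lemma' f hdiff hgradcont (LS * ‖Δ‖ ^ 2) w Δ hlipseg
    -- inner term
    have hinner : ⟪gradient f w, Δ⟫ = -γ * ⟪g, matVec A v⟫ := by
      rw [inner_supp_eq_blockGrad' f S w Δ hΔs, ← hgdef, hΔdef,
        real_inner_smul_right, hudef]
    -- assemble
    rw [hstep]
    have hΔsq : ‖Δ‖ ^ 2 = γ ^ 2 * ‖u‖ ^ 2 := by rw [hΔnorm]; ring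
    have hγpos := hγ.le
    have key : ⟪gradient f w, Δ⟫ ≤
        -(γ * σ₁ / 2) * ‖g‖ ^ 2 + (γ * σ₂ / 2) * ‖e‖ ^ 2 := by
      rw [hinner]
      have := mul_le_mul_of_nonneg_left hcross hγ.le
      linarith [this]
    have quad : LS * ‖Δ‖ ^ 2 / 2 ≤ (LS * γ ^ 2 * σ₂ ^ 2 / 2) * ‖v‖ ^ 2 := by
      rw [hΔsq]
      have c0 : (0:ℝ) ≤ LS * γ ^ 2 / 2 :=
        div_nonneg (mul_nonneg hLS (sq_nonneg γ)) (by norm_num)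
      have := mul_le_mul_of_nonneg_left hAv c0
      linarith [this]
    have hE2 : (γ * σ₂ / 2) * ‖e‖ ^ 2 ≤ (γ * σ₂ * L ^ 2 / 2) * ‖w - wHat‖ ^ 2 := by
      have c0 : (0:ℝ) ≤ γ * σ₂ / 2 := by positivity
      have := mul_le_mul_of_nonneg_left hE c0
      linarith [this]
    linarith [hdesc, key, quad, hE2]
end
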